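/- Let E = (C,V,A,w,k) be a weighted ABC election, let c_1,…,c_k be the k candidates selected by SAV labeled in order of selection (non-increasing SAV score), let ℓ ∈ {1,…,k}, and let x = Σ_{v∈V_{c_{k−ℓ+1}}} w(v)/|A_v| be the SAV score of candidate c_{k−ℓ+1}. Then the minimum weight of an ℓ-replacement that is successful for SAV equals ℓ·x; in particular, the ℓ-replacement consisting of ℓ new voters, each of weight x and each approving exactly one distinct new candidate, is successful and has minimum weight among all successful ℓ-replacements. -/
import Mathlib


open Finset

variable {Cand Voter : Type} [DecidableEq Cand] [DecidableEq Voter]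

/-- The SAV score of candidate `c`: each voter `v` approving `c` contributes `w v / |A v|`. -/
noncomputable def savScore (V : Finset Voter) (A : Voter → Finset Cand) (w : Voter → ℝ)
    (c : Cand) : ℝ :=
  ∑ v ∈ V.filter fun v => c ∈ A v, w v / (A v).card

/-- `W` is a committee that Satisfaction Approval Voting may select in `(C,V,A,w,k)`:
it consists of `k` candidates with highest SAV score. -/
def IsSAVCommittee (C : Finset Cand) (V : Finset Voter) (A : Voter → Finset Cand)
    (w : Voter → ℝ) (k : ℕ) (W : Finset Cand) : Prop :=
  W ⊆ C ∧ W.card = k ∧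
    ∀ c ∈ W, ∀ c' ∈ C \ W, savScore V A w c' ≤ savScore V A w c

/-- The `ℓ`-replacement `(C',V',A',w')` is successful for SAV on `(C,V,A,w,k)`:
with ties broken in favor of the candidates in `C'`, SAV run on the extended election
selects all candidates of `C'`, i.e. some SAV committee of the extended election contains `C'`. -/
def SAVSuccessful (C : Finset Cand) (V : Finset Voter) (A : Voter → Finset Cand)
    (w : Voter → ℝ) (k : ℕ) (C' : Finset Cand) (V' : Finset Voter)
    (A' : Voter → Finset Cand) (w' : Voter → ℝ) : Prop :=
  ∃ W : Finset Cand,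
    IsSAVCommittee (C ∪ C') (V ∪ V') (fun v => if v ∈ V then A v else A' v)
      (fun v => if v ∈ V then w v else w' v) k W ∧ C' ⊆ W

lemma fin_filter_card (k m : ℕ) (h : m ≤ k) :
    ((univ : Finset (Fin k)).filter fun i : Fin k => (i : ℕ) < m).card = m := by
  have : ((univ : Finset (Fin k)).filter fun i : Fin k => (i : ℕ) < m)
      = Finset.map (Fin.castLEEmb h) univ := by
    ext i
    simp only [mem_filter, mem_univ, true_and, mem_map, Fin.castLEEmb]
    constructor
    · intro hi; exact ⟨⟨i, hi⟩, rfl⟩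
    · rintro ⟨j, rfl⟩; exact j.isLt
  rw [this, card_map, card_univ, Fintype.card_fin]

lemma savScore_ext_old (V V'' : Finset Voter) (hdisj : Disjoint V V'')
    (A A'' : Voter → Finset Cand) (w w'' : Voter → ℝ) (d : Cand)
    (hd : ∀ v ∈ V'', d ∉ A'' v) :
    savScore (V ∪ V'') (fun v => if v ∈ V then A v else A'' v)
      (fun v => if v ∈ V then w v else w'' v) d = savScore V A w d := by
  unfold savScore
  rw [filter_union, sum_union (disjoint_filter_filter hdisj)]
  have h1 : (V''.filter fun v => d ∈ (if v ∈ V then A v else A'' v)) = ∅ := by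
    rw [filter_eq_empty_iff]
    intro v hv
    rw [if_neg (disjoint_right.mp hdisj hv)]
    exact hd v hv
  rw [h1, sum_empty, add_zero]
  rw [show (V.filter fun v => d ∈ (if v ∈ V then A v else A'' v)) = V.filter (fun v => d ∈ A v) from filter_congr (fun v hv => by rw [if_pos hv])]
  exact sum_congr rfl fun v hv => by
    have := (mem_filter.mp hv).1
    simp only [if_pos this]

lemma savScore_ext_new (V V'' : Finset Voter) (hdisj : Disjoint V V'')
    (A A'' : Voter → Finset Cand) (w w'' : Voter → ℝ) (d : Cand)
    (hd : ∀ v ∈ V, d ∉ A v) :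
    savScore (V ∪ V'') (fun v => if v ∈ V then A v else A'' v)
      (fun v => if v ∈ V then w v else w'' v) d = savScore V'' A'' w'' d := by
  unfold savScore
  rw [filter_union, sum_union (disjoint_filter_filter hdisj)]
  have h1 : (V.filter fun v => d ∈ (if v ∈ V then A v else A'' v)) = ∅ := by
    rw [filter_eq_empty_iff]
    intro v hv
    rw [if_pos hv]
    exact hd v hv
  rw [h1, sum_empty, zero_add]
  rw [show (V''.filter fun v => d ∈ (if v ∈ V then A v else A'' v)) = V''.filter (fun v => d ∈ A'' v) from filter_congr (fun v hv => by rw [if_neg (disjoint_right.mp hdisj hv)])]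
  exact sum_congr rfl fun v hv => by
    have := disjoint_right.mp hdisj (mem_filter.mp hv).1
    simp only [if_neg this]

lemma sum_savScore_le (V'' : Finset Voter) (C'' : Finset Cand)
    (A'' : Voter → Finset Cand) (w'' : Voter → ℝ)
    (hA : ∀ v ∈ V'', A'' v ⊆ C'') (hw : ∀ v ∈ V'', 0 ≤ w'' v) :
    ∑ d ∈ C'', savScore V'' A'' w'' d ≤ ∑ v ∈ V'', w'' v := by
  unfold savScore
  have : ∑ d ∈ C'', ∑ v ∈ V''.filter fun v => d ∈ A'' v, w'' v / (A'' v).card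
      = ∑ v ∈ V'', (A'' v).card * (w'' v / (A'' v).card) := by
    simp_rw [sum_filter]
    rw [Finset.sum_comm]
    refine sum_congr rfl fun v hv => ?_
    rw [Finset.sum_ite_mem, inter_eq_right.mpr (hA v hv), sum_const, nsmul_eq_mul]
  rw [this]
  refine sum_le_sum fun v hv => ?_
  rcases eq_or_ne ((A'' v).card : ℝ) 0 with h | h
  · rw [h, zero_mul]; exact hw v hv
  · rw [mul_div_cancel₀ _ h]

set_option maxHeartbeats 800000 in
/-- Let `x` be the SAV score of the `(k-ℓ+1)`-th candidate selected by SAV. Then the minimum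
weight of an `ℓ`-replacement that is successful for SAV equals `ℓ·x`: the `ℓ`-replacement
consisting of `ℓ` new voters, each of weight `x` and each approving exactly one distinct new
candidate, is successful and has weight `ℓ·x`, and every successful `ℓ`-replacement has weight
at least `ℓ·x`. -/
theorem sav_replacement_min_cost
    (C : Finset Cand) (V : Finset Voter) (A : Voter → Finset Cand) (w : Voter → ℝ) (k : ℕ)
    (hA : ∀ v ∈ V, A v ⊆ C) (hw : ∀ v ∈ V, 0 ≤ w v) (hk : k ≤ C.card)
    (c : Fin k → Cand) (hcinj : Function.Injective c) (hcmem : ∀ i, c i ∈ C)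
    (hcmono : ∀ i j : Fin k, i ≤ j → savScore V A w (c j) ≤ savScore V A w (c i))
    (hcSAV : IsSAVCommittee C V A w k (Finset.univ.image c))
    (ℓ : ℕ) (hℓ1 : 1 ≤ ℓ) (hℓk : ℓ ≤ k)
    (x : ℝ) (hx : x = savScore V A w (c ⟨k - ℓ, by omega⟩))
    -- the witness replacement: `ℓ` new voters, each approving one distinct new candidate
    (c' : Fin ℓ → Cand) (hc'inj : Function.Injective c') (hc'new : ∀ i, c' i ∉ C)
    (v' : Fin ℓ → Voter) (hv'inj : Function.Injective v') (hv'new : ∀ i, v' i ∉ V)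
    (A' : Voter → Finset Cand) (w' : Voter → ℝ)
    (hA' : ∀ i, A' (v' i) = {c' i}) (hw' : ∀ i, w' (v' i) = x) :
    (SAVSuccessful C V A w k (Finset.univ.image c') (Finset.univ.image v') A' w' ∧
      ∑ v ∈ Finset.univ.image v', w' v = ℓ * x) ∧
    (∀ (C'' : Finset Cand) (V'' : Finset Voter) (A'' : Voter → Finset Cand) (w'' : Voter → ℝ),
      C''.card = ℓ → Disjoint C C'' → Disjoint V V'' →
      (∀ v ∈ V'', A'' v ⊆ C'') → (∀ v ∈ V'', 0 ≤ w'' v) →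
      SAVSuccessful C V A w k C'' V'' A'' w'' →
      ℓ * x ≤ ∑ v ∈ V'', w'' v) := by
  classical
  have hkl : k - ℓ < k := by omega
  constructor
  · constructor
    · -- successfulness of the witness
      have hdisjV : Disjoint V (Finset.univ.image v') := by
        rw [disjoint_right]; intro a ha
        simp only [mem_image, mem_univ, true_and] at ha
        obtain ⟨i, rfl⟩ := ha; exact hv'new i
      have hextold : ∀ d ∈ C, savScore (V ∪ Finset.univ.image v')
          (fun v => if v ∈ V then A v else A' v)
          (fun v => if v ∈ V then w v else w' v) d = savScore V A w d := by
        intro d hd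
        apply savScore_ext_old _ _ hdisjV
        intro v hv
        simp only [mem_image, mem_univ, true_and] at hv
        obtain ⟨i, rfl⟩ := hv
        rw [hA', mem_singleton]
        rintro rfl; exact hc'new i hd
      have hextnew : ∀ i : Fin ℓ, savScore (V ∪ Finset.univ.image v')
          (fun v => if v ∈ V then A v else A' v)
          (fun v => if v ∈ V then w v else w' v) (c' i) = x := by
        intro i
        rw [savScore_ext_new _ _ hdisjV _ _ _ _ _ (fun v hv hmem => hc'new i (hA v hv hmem))]
        unfold savScore
        have hfilter : (Finset.univ.image v').filter (fun v => c' i ∈ A' v) = {v' i} := by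
          ext u
          simp only [mem_filter, mem_image, mem_univ, true_and, mem_singleton]
          constructor
          · rintro ⟨⟨j, rfl⟩, hmem⟩
            rw [hA' j, mem_singleton] at hmem
            exact congrArg v' (hc'inj hmem.symm)
          · rintro rfl
            exact ⟨⟨i, rfl⟩, by rw [hA' i]; exact mem_singleton_self _⟩
        rw [hfilter, sum_singleton, hA' i, hw' i]
        simp
      set T : Finset Cand := ((Finset.univ : Finset (Fin k)).filter fun i : Fin k => (i:ℕ) < k - ℓ).image c with hT
      have hTC : T ⊆ C := by
        intro a ha
        simp only [hT, mem_image] at ha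
        obtain ⟨i, _, rfl⟩ := ha; exact hcmem i
      have hdisjTC' : Disjoint (Finset.univ.image c') T := by
        rw [disjoint_left]; intro a ha ha'
        simp only [mem_image, mem_univ, true_and] at ha
        obtain ⟨i, rfl⟩ := ha
        exact hc'new i (hTC ha')
      refine ⟨Finset.univ.image c' ∪ T, ⟨?_, ?_, ?_⟩, subset_union_left⟩
      · exact union_subset subset_union_right (hTC.trans subset_union_left)
      · rw [card_union_of_disjoint hdisjTC', hT,
          card_image_of_injOn hcinj.injOn, fin_filter_card _ _ (by omega),
          card_image_of_injOn hc'inj.injOn, card_univ, Fintype.card_fin]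
        omega
      · intro cw hcw d hd
        rw [mem_sdiff] at hd
        have hdC : d ∈ C := by
          rcases mem_union.mp hd.1 with h | h
          · exact h
          · exact absurd (mem_union_left _ h) hd.2
        have hdx : savScore V A w d ≤ x := by
          by_cases hdim : d ∈ Finset.univ.image c
          · obtain ⟨j, _, rfl⟩ := mem_image.mp hdim
            have hj : ¬ ((j:ℕ) < k - ℓ) := fun hlt =>
              hd.2 (mem_union_right _ (mem_image.mpr ⟨j, mem_filter.mpr ⟨mem_univ _, hlt⟩, rfl⟩))
            rw [hx]
            exact hcmono ⟨k - ℓ, hkl⟩ j (Fin.le_def.mpr (by simpa using by omega))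
          · rw [hx]
            exact hcSAV.2.2 _ (mem_image.mpr ⟨_, mem_univ _, rfl⟩) d (mem_sdiff.mpr ⟨hdC, hdim⟩)
        rw [hextold d hdC]
        refine le_trans hdx ?_
        rcases mem_union.mp hcw with h | h
        · obtain ⟨i, _, rfl⟩ := mem_image.mp h
          exact (hextnew i).ge
        · simp only [hT, mem_image] at h
          obtain ⟨i, hi, rfl⟩ := h
          rw [hextold _ (hcmem i), hx]
          exact hcmono i ⟨k - ℓ, hkl⟩ (Fin.le_def.mpr (le_of_lt (mem_filter.mp hi).2))
    · -- weight of the witness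
      rw [Finset.sum_image (fun i _ j _ h => hv'inj h)]
      simp only [hw']
      rw [sum_const, card_univ, Fintype.card_fin, nsmul_eq_mul]
  · -- lower bound
    intro C'' V'' A'' w'' hcard hdC'' hdV'' hA'' hw'' hsucc
    obtain ⟨W, ⟨hWsub, hWcard, hWcomm⟩, hC''W⟩ := hsucc
    have hWeq : W = (W ∩ C) ∪ C'' := by
      ext a; constructor
      · intro ha
        rcases mem_union.mp (hWsub ha) with h | h
        · exact mem_union_left _ (mem_inter.mpr ⟨ha, h⟩)
        · exact mem_union_right _ h
      · intro ha
        rcases mem_union.mp ha with h | h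
        · exact (mem_inter.mp h).1
        · exact hC''W h
    have hdisj2 : Disjoint (W ∩ C) C'' := hdC''.mono_left inter_subset_right
    have hWCcard : (W ∩ C).card = k - ℓ := by
      have h1 := congrArg Finset.card hWeq
      rw [card_union_of_disjoint hdisj2, hcard, hWcard] at h1
      omega
    have hpig : ∃ j : Fin k, (j:ℕ) ≤ k - ℓ ∧ c j ∉ W := by
      by_contra h
      push_neg at h
      have hsub : (((Finset.univ : Finset (Fin k)).filter fun i : Fin k => (i:ℕ) < k - ℓ + 1).image c) ⊆ W ∩ C := by
        intro a ha
        obtain ⟨i, hi, rfl⟩ := mem_image.mp ha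
        have hlt := (mem_filter.mp hi).2
        exact mem_inter.mpr ⟨h i (by omega), hcmem i⟩
      have hle := card_le_card hsub
      rw [card_image_of_injOn hcinj.injOn, fin_filter_card _ _ (by omega), hWCcard] at hle
      omega
    obtain ⟨j, hj, hjW⟩ := hpig
    have hkey : ∀ d ∈ C'', x ≤ savScore V'' A'' w'' d := by
      intro d hd
      have hcjout : c j ∈ (C ∪ C'') \ W := mem_sdiff.mpr ⟨mem_union_left _ (hcmem j), hjW⟩
      have hcomm := hWcomm d (hC''W hd) (c j) hcjout
      rw [savScore_ext_old _ _ hdV'' _ _ _ _ _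
          (fun v hv hmem => disjoint_left.mp hdC'' (hcmem j) (hA'' v hv hmem)),
        savScore_ext_new _ _ hdV'' _ _ _ _ _
          (fun v hv hmem => disjoint_left.mp hdC'' (hA v hv hmem) hd)] at hcomm
      refine le_trans ?_ hcomm
      rw [hx]
      exact hcmono j ⟨k - ℓ, hkl⟩ (Fin.le_def.mpr hj)
    calc (ℓ : ℝ) * x = ∑ _d ∈ C'', x := by rw [sum_const, hcard, nsmul_eq_mul]
      _ ≤ ∑ d ∈ C'', savScore V'' A'' w'' d := sum_le_sum hkey
      _ ≤ ∑ v ∈ V'', w'' v := sum_savScore_le _ _ _ _ hA'' hw''
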